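/- If q is an s–t path with c(q) < c(p̃_{s,v,t}) for some vertex v, then every vertex u lying on q belongs to a maximal reciprocal pointer chain whose associated cascading via-path has cost strictly less than c(p̃_{s,v,t}). -/

import Mathlib

variable {V : Type*}

/-- `p` is a path from `u` to `w` in the digraph with edge relation `E`:
a nonempty finite sequence of vertices beginning at `u` and ending at `w`
in which every consecutive pair of vertices is an edge. -/
def IsPath (E : V → V → Prop) (p : List V) (u w : V) : Prop :=
  p ≠ [] ∧ p.head? = some u ∧ p.getLast? = some w ∧ p.Chain' E

/-- The cost of a path: the sum of the weights of its edges. -/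
def pathCost (c : V → V → ℝ) (p : List V) : ℝ :=
  ((p.zip p.tail).map fun e => c e.1 e.2).sum

/-- A shortest path from `u` to `w`: a path from `u` to `w` of minimum cost. -/
def IsShortestPath (E : V → V → Prop) (c : V → V → ℝ) (p : List V) (u w : V) : Prop :=
  IsPath E p u w ∧ ∀ q, IsPath E q u w → pathCost c p ≤ pathCost c q

/-- A via-path for `v`: an `s`–`t` path of minimum cost among all `s`–`t`
paths passing through `v`. -/
def IsViaPath (E : V → V → Prop) (c : V → V → ℝ) (s t v : V) (p : List V) : Prop :=
  IsPath E p s t ∧ v ∈ p ∧ ∀ q, IsPath E q s t → v ∈ q → pathCost c p ≤ pathCost c q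

/-- The minimum cost of an `s`–`t` path passing through `v`. -/
noncomputable def viaCost (E : V → V → Prop) (c : V → V → ℝ) (s t v : V) : ℝ :=
  sInf (pathCost c '' {p | IsPath E p s t ∧ v ∈ p})

/-- A predecessor shortest path tree rooted at the source `s`: a map `b`
assigning to each vertex `v ≠ s` a vertex `b v` with an edge from `b v` to `v`,
such that iterating `b` from any `v` terminates at `s` and the resulting path
`pathTo v` (read from `s` to `v`) is a shortest path from `s` to `v`. -/
structure PredSPT (E : V → V → Prop) (c : V → V → ℝ) (s : V) where
  b : V → V
  pathTo : V → List V
  edge : ∀ v, v ≠ s → E (b v) v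
  pathTo_src : pathTo s = [s]
  pathTo_step : ∀ v, v ≠ s → pathTo v = pathTo (b v) ++ [v]
  shortest : ∀ v, IsShortestPath E c (pathTo v) s v

/-- A successor shortest path tree rooted at the target `t`: a map `f`
assigning to each vertex `v ≠ t` a vertex `f v` with an edge from `v` to `f v`,
such that iterating `f` from any `v` terminates at `t` and the resulting path
`pathFrom v` is a shortest path from `v` to `t`. -/
structure SuccSPT (E : V → V → Prop) (c : V → V → ℝ) (t : V) where
  f : V → V
  pathFrom : V → List V
  edge : ∀ v, v ≠ t → E v (f v)
  pathFrom_tgt : pathFrom t = [t]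
  pathFrom_step : ∀ v, v ≠ t → pathFrom v = v :: pathFrom (f v)
  shortest : ∀ v, IsShortestPath E c (pathFrom v) v t

variable {E : V → V → Prop} {c : V → V → ℝ} {s t : V}

/-- The cascading via-path (CVP) of a vertex `v`: the tree path `p̃_{s,v}`
followed by the tree path `p̃_{v,t}`. -/
def CVP (B : PredSPT E c s) (F : SuccSPT E c t) (v : V) : List V :=
  B.pathTo v ++ (F.pathFrom v).tail

/-- A reciprocal pointer chain (RPC): a nonempty sequence of vertices
`(v_1, …, v_n)` such that for all `1 ≤ i < n`, `b (v_{i+1}) = v_i` and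
`f (v_i) = v_{i+1}` (as pointers of the two shortest path trees, so in
particular `v_{i+1} ≠ s` and `v_i ≠ t`). -/
def IsRPC (B : PredSPT E c s) (F : SuccSPT E c t) (r : List V) : Prop :=
  r ≠ [] ∧ r.Chain' fun x y => y ≠ s ∧ x ≠ t ∧ B.b y = x ∧ F.f x = y

/-- A maximal RPC: an RPC whose set of vertices is not a (strict) subset of the
vertex set of any other RPC. -/
def IsMaximalRPC [DecidableEq V] (B : PredSPT E c s) (F : SuccSPT E c t)
    (r : List V) : Prop :=
  IsRPC B F r ∧
    ∀ r', IsRPC B F r' → r.toFinset ⊆ r'.toFinset → r'.toFinset = r.toFinset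

/-- The Jaccard distance between the vertex sets of two paths. -/
noncomputable def jaccardDist [DecidableEq V] (p q : List V) : ℝ :=
  1 - ((p.toFinset ∩ q.toFinset).card : ℝ) / ((p.toFinset ∪ q.toFinset).card : ℝ)

/-- A plateau: a nonempty sequence of vertices in which every consecutive pair
is an edge and all vertices have the same minimum via-path cost. -/
def IsPlateau (E : V → V → Prop) (c : V → V → ℝ) (s t : V) (q : List V) : Prop :=
  q ≠ [] ∧ q.Chain' fun x y => E x y ∧ viaCost E c s t x = viaCost E c s t y

/-- A maximal plateau: a plateau whose set of vertices is not a (strict) subset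
of the vertex set of any other plateau. -/
def IsMaximalPlateau [DecidableEq V] (E : V → V → Prop) (c : V → V → ℝ)
    (s t : V) (q : List V) : Prop :=
  IsPlateau E c s t q ∧
    ∀ q', IsPlateau E c s t q' → q.toFinset ⊆ q'.toFinset → q'.toFinset = q.toFinset

/-!
Along a link `x → y` of a reciprocal pointer chain both tree paths shift by one vertex,
`p̃_{s,y} = p̃_{s,x} ++ [y]` and `p̃_{x,t} = x :: p̃_{y,t}`, so all vertices of an RPC share one
CVP. Splitting `q` at `u` into an `s`–`u` and a `u`–`t` path gives
`c(p̃_{s,u,t}) ≤ c(q) < c(p̃_{s,v,t})`. A maximal RPC through `u` exists because every RPC through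
`u` lies inside the CVP of `u`, which bounds the size of its vertex set.
-/

lemma pathCost_cons_cons (x y : V) (l : List V) :
    pathCost c (x :: y :: l) = c x y + pathCost c (y :: l) := by
  simp [pathCost]

lemma pathCost_append_cons (a : List V) (m : V) (l : List V) :
    pathCost c (a ++ m :: l) = pathCost c (a ++ [m]) + pathCost c (m :: l) := by
  induction a with
  | nil => simp [pathCost]
  | cons x a ih =>
    cases a with
    | nil => simp [pathCost]
    | cons y a =>
      simp only [List.cons_append, pathCost_cons_cons] at ih ⊢
      rw [ih, add_assoc]

lemma IsPath.exists_split_of_mem {q : List V} {a b m : V} (hq : IsPath E q a b) (hm : m ∈ q) :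
    ∃ q₁ q₂, q = q₁ ++ m :: q₂ ∧ IsPath E (q₁ ++ [m]) a m ∧ IsPath E (m :: q₂) m b := by
  obtain ⟨q₁, q₂, rfl⟩ := List.append_of_mem hm
  obtain ⟨-, hhead, hlast, hchain⟩ := hq
  obtain ⟨hchain₁, hchain₂, hlink⟩ := List.isChain_append.1 hchain
  refine ⟨q₁, q₂, rfl, ⟨by simp, ?_, by simp, ?_⟩, ⟨by simp, by simp, ?_, hchain₂⟩⟩
  · cases q₁ <;> simpa using hhead
  · exact List.isChain_append.2 ⟨hchain₁, by simp, fun x hx y hy => by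
      simp only [List.head?_cons, Option.mem_def, Option.some_inj] at hy
      exact hy ▸ hlink x hx m rfl⟩
  · simpa [List.getLast?_append] using hlast

lemma PredSPT.dropLast_pathTo_append (B : PredSPT E c s) (v : V) :
    (B.pathTo v).dropLast ++ [v] = B.pathTo v :=
  List.dropLast_append_getLast? v (B.shortest v).1.2.2.1

lemma PredSPT.mem_pathTo_self (B : PredSPT E c s) (v : V) : v ∈ B.pathTo v :=
  List.mem_of_getLast? (B.shortest v).1.2.2.1

lemma SuccSPT.pathFrom_eq_cons_tail (F : SuccSPT E c t) (v : V) :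
    F.pathFrom v = v :: (F.pathFrom v).tail := by
  obtain ⟨l, hl⟩ := List.head?_eq_some_iff.1 (F.shortest v).1.2.1
  rw [hl, List.tail_cons]

lemma mem_CVP_self (B : PredSPT E c s) (F : SuccSPT E c t) (v : V) : v ∈ CVP B F v :=
  List.mem_append_left _ (B.mem_pathTo_self v)

lemma pathCost_CVP (B : PredSPT E c s) (F : SuccSPT E c t) (v : V) :
    pathCost c (CVP B F v) = pathCost c (B.pathTo v) + pathCost c (F.pathFrom v) := by
  conv_lhs => rw [CVP, ← B.dropLast_pathTo_append, List.append_assoc, List.singleton_append,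
    pathCost_append_cons, ← F.pathFrom_eq_cons_tail, B.dropLast_pathTo_append]

lemma pathCost_CVP_le_of_mem (B : PredSPT E c s) (F : SuccSPT E c t) {q : List V} {u : V}
    (hq : IsPath E q s t) (hu : u ∈ q) : pathCost c (CVP B F u) ≤ pathCost c q := by
  obtain ⟨q₁, q₂, rfl, h₁, h₂⟩ := hq.exists_split_of_mem hu
  rw [pathCost_CVP, pathCost_append_cons]
  exact add_le_add ((B.shortest u).2 _ h₁) ((F.shortest u).2 _ h₂)

lemma CVP_eq_of_reciprocal (B : PredSPT E c s) (F : SuccSPT E c t) {x y : V}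
    (hy : y ≠ s) (hx : x ≠ t) (hb : B.b y = x) (hf : F.f x = y) :
    CVP B F x = CVP B F y := by
  rw [CVP, CVP, F.pathFrom_step x hx, hf, List.tail_cons, B.pathTo_step y hy, hb,
    List.append_assoc, List.singleton_append, ← F.pathFrom_eq_cons_tail]

lemma IsRPC.CVP_eq {B : PredSPT E c s} {F : SuccSPT E c t} {r : List V} (hr : IsRPC B F r)
    {x y : V} (hx : x ∈ r) (hy : y ∈ r) : CVP B F x = CVP B F y := by
  have hchain : (r.map (CVP B F)).IsChain (· = ·) :=
    List.isChain_map_of_isChain _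
      (fun _ _ ⟨hs, ht, hb, hf⟩ => CVP_eq_of_reciprocal B F hs ht hb hf) hr.2
  exact (List.isChain_iff_pairwise.1 hchain).forall_of_forall (fun _ _ => rfl)
    (List.mem_map_of_mem hx) (List.mem_map_of_mem hy)

lemma IsRPC.subset_CVP {B : PredSPT E c s} {F : SuccSPT E c t} {r : List V} (hr : IsRPC B F r)
    {u : V} (hu : u ∈ r) : r ⊆ CVP B F u :=
  fun x hx => hr.CVP_eq hx hu ▸ mem_CVP_self B F x

lemma exists_isMaximalRPC_mem [DecidableEq V] (B : PredSPT E c s) (F : SuccSPT E c t) (u : V) :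
    ∃ r, IsMaximalRPC B F r ∧ u ∈ r := by
  set sizes : Set ℕ := {n | ∃ r, IsRPC B F r ∧ u ∈ r ∧ r.toFinset.card = n}
  have hne : sizes.Nonempty := ⟨1, [u], ⟨by simp, List.isChain_singleton _⟩, by simp, by simp⟩
  have hbdd : BddAbove sizes := by
    refine ⟨(CVP B F u).toFinset.card, ?_⟩
    rintro _ ⟨r, hr, hu, rfl⟩
    exact Finset.card_le_card fun x hx =>
      List.mem_toFinset.2 (hr.subset_CVP hu (List.mem_toFinset.1 hx))
  obtain ⟨r, hr, hu, hcard⟩ := Nat.sSup_mem hne hbdd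
  refine ⟨r, ⟨hr, fun r' hr' hsub => ?_⟩, hu⟩
  have hu' : u ∈ r' := List.mem_toFinset.1 (hsub (List.mem_toFinset.2 hu))
  exact (Finset.eq_of_subset_of_card_le hsub (hcard ▸ le_csSup hbdd ⟨r', hr', hu', rfl⟩)).symm

theorem shorter_paths_use_shorter_rpc_nodes_general [DecidableEq V]
    {E : V → V → Prop} {c : V → V → ℝ} {s t : V}
    (B : PredSPT E c s) (F : SuccSPT E c t)
    (v : V) (q : List V) (hq : IsPath E q s t)
    (hlt : pathCost c q < pathCost c (CVP B F v)) :
    ∀ u ∈ q, ∃ r, IsMaximalRPC B F r ∧ u ∈ r ∧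
      ∀ w ∈ r, pathCost c (CVP B F w) < pathCost c (CVP B F v) := by
  intro u hu
  obtain ⟨r, hr, hur⟩ := exists_isMaximalRPC_mem B F u
  refine ⟨r, hr, hur, fun w hw => ?_⟩
  rw [hr.1.CVP_eq hw hur]
  exact (pathCost_CVP_le_of_mem B F hq hu).trans_lt hlt

/-- If `q` is an `s`–`t` path with `c(q) < c(p̃_{s,v,t})`, then
every vertex `u` on `q` belongs to a maximal RPC whose associated CVP (the
common CVP of its member vertices) has cost strictly less than `c(p̃_{s,v,t})`. -/
theorem shorter_paths_use_shorter_rpc_nodes [Fintype V] [DecidableEq V]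
    {E : V → V → Prop} {c : V → V → ℝ} {s t : V}
    (hc : ∀ u w, E u w → 0 ≤ c u w)
    (B : PredSPT E c s) (F : SuccSPT E c t)
    (v : V) (q : List V) (hq : IsPath E q s t)
    (hlt : pathCost c q < pathCost c (CVP B F v)) :
    ∀ u ∈ q, ∃ r, IsMaximalRPC B F r ∧ u ∈ r ∧
      ∀ w ∈ r, pathCost c (CVP B F w) < pathCost c (CVP B F v) :=
  shorter_paths_use_shorter_rpc_nodes_general B F v q hq hlt
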